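/- For n = 9 and every k ≥ 1, the number of meaningful compositions satisfies the recurrence f(k+5) = f(k+4) + 4·f(k+3) − 3·f(k+2) − 3·f(k+1) + f(k). -/

import Mathlib

/-!
Counting meaningful compositions by their first entry gives a vector of counts on which each
extra step acts by the 0/1 matrix `A` of `ρ`, so `f (k + 1) = 1 ⬝ᵥ (A ^ k *ᵥ 1)`. For `n = 9` the
polynomial `p = X⁵ - X⁴ - 4X³ + 3X² + 3X - 1` does not annihilate `A`, but every row of `p(A)` sums
to `0`, i.e. `p(A) *ᵥ 1 = 0`; hence `k ↦ f (k + 1)` satisfies the linear recurrence with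
characteristic polynomial `p`.
-/

/-- The relation "to be in composition" on `{1,…,n}`: the composition
`∇_j ∘ ∇_i` is meaningful iff `j = i + 1` or `i + j = n + 1`. -/
def rho (n i j : ℕ) : Prop := j = i + 1 ∨ i + j = n + 1

instance (n i j : ℕ) : Decidable (rho n i j) := by unfold rho; infer_instance

/-- A `k`-tuple `(i₁,…,i_k) ∈ {1,…,n}^k` (encoded as `g : Fin k → Fin n`, where
`i_t = (g (t-1) : ℕ) + 1`) is a meaningful composition iff every pair of
consecutive entries is related by `rho`. -/
def Meaningful (n k : ℕ) (g : Fin k → Fin n) : Prop :=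
  ∀ t : Fin (k - 1),
    rho n (((g ⟨t, lt_of_lt_of_le t.2 (Nat.sub_le k 1)⟩ : Fin n) : ℕ) + 1)
          (((g ⟨(t : ℕ) + 1, Nat.add_lt_of_lt_sub t.2⟩ : Fin n) : ℕ) + 1)

instance (n k : ℕ) (g : Fin k → Fin n) : Decidable (Meaningful n k g) := by
  unfold Meaningful; infer_instance

/-- `numComp n k` is the number of meaningful compositions of order `k` on `ℝⁿ`. -/
def numComp (n k : ℕ) : ℕ := Fintype.card {g : Fin k → Fin n // Meaningful n k g}

open Matrix Polynomial

theorem LinearRecurrence.isSolution_dotProduct_pow_mulVec {R ι : Type*} [CommRing R] [Fintype ι]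
    [DecidableEq ι] (E : LinearRecurrence R) {A : Matrix ι ι R} {v : ι → R}
    (hv : aeval A E.charPoly *ᵥ v = 0) (w : ι → R) :
    E.IsSolution fun k => w ⬝ᵥ (A ^ k *ᵥ v) := by
  have hA : A ^ E.order *ᵥ v = ∑ i, E.coeffs i • (A ^ (i : ℕ) *ᵥ v) := by
    simpa [charPoly, aeval_monomial, sub_mulVec, sum_mulVec, Algebra.algebraMap_eq_smul_one,
      sub_eq_zero, smul_mulVec] using hv
  intro n
  simp only [pow_add, ← mulVec_mulVec, hA, mulVec_sum, dotProduct_sum, mulVec_smul,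
    dotProduct_smul, smul_eq_mul]

theorem meaningful_cons_iff {n k : ℕ} (i : Fin n) (g : Fin (k + 1) → Fin n) :
    Meaningful n (k + 2) (Fin.cons i g) ↔
      rho n ((i : ℕ) + 1) ((g 0 : ℕ) + 1) ∧ Meaningful n (k + 1) g := by
  refine ⟨fun h => ⟨h ⟨0, k.succ_pos⟩, fun t => h ⟨t + 1, by omega⟩⟩, ?_⟩
  rintro ⟨h0, hg⟩ ⟨_ | t, ht⟩
  · exact h0
  · exact hg ⟨t, by omega⟩

def numCompFrom (n k : ℕ) (j : Fin n) : ℕ :=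
  Fintype.card {g : Fin (k + 1) → Fin n // Meaningful n (k + 1) g ∧ g 0 = j}

def rhoMatrix (n : ℕ) : Matrix (Fin n) (Fin n) ℤ :=
  Matrix.of fun i j => if rho n ((i : ℕ) + 1) ((j : ℕ) + 1) then 1 else 0

section Counting

variable {n : ℕ}

theorem numComp_succ_eq_sum_numCompFrom (k : ℕ) :
    numComp n (k + 1) = ∑ j, numCompFrom n k j := by
  simp only [numComp, numCompFrom, Fintype.card_subtype]
  rw [Finset.card_eq_sum_card_fiberwise (f := fun g => g 0) (t := Finset.univ) (by simp)]
  simp only [Finset.filter_filter]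

theorem numCompFrom_zero (j : Fin n) : numCompFrom n 0 j = 1 := by
  rw [numCompFrom, Fintype.card_eq_one_iff]
  refine ⟨⟨fun _ => j, fun t => t.elim0, rfl⟩, fun ⟨g, _, hg⟩ => ?_⟩
  ext t : 2
  rw [Fin.fin_one_eq_zero t]
  exact hg

theorem numCompFrom_succ (k : ℕ) (i : Fin n) :
    numCompFrom n (k + 1) i =
      ∑ j : Fin n, if rho n ((i : ℕ) + 1) ((j : ℕ) + 1) then numCompFrom n k j else 0 := by
  have tailEquiv : {g : Fin (k + 2) → Fin n // Meaningful n (k + 2) g ∧ g 0 = i} ≃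
      {g : Fin (k + 1) → Fin n // rho n ((i : ℕ) + 1) ((g 0 : ℕ) + 1) ∧ Meaningful n (k + 1) g} :=
    { toFun := fun g => ⟨Fin.tail g.1, by
        obtain ⟨g, hg, rfl⟩ := g
        rwa [← Fin.cons_self_tail g, meaningful_cons_iff] at hg⟩
      invFun := fun g => ⟨Fin.cons i g.1, (meaningful_cons_iff i g.1).2 g.2, rfl⟩
      left_inv := fun ⟨g, _, hg⟩ => by
        ext1
        simp only
        rw [← hg, Fin.cons_self_tail]
      right_inv := fun g => by simp }
  rw [numCompFrom, Fintype.card_congr tailEquiv, Fintype.card_subtype,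
    Finset.card_eq_sum_card_fiberwise (f := fun g => g 0) (t := Finset.univ) (by simp)]
  refine Finset.sum_congr rfl fun j _ => ?_
  rw [numCompFrom, Fintype.card_subtype, Finset.filter_filter]
  split_ifs with hj
  · congr 1
    ext g
    simp only [Finset.mem_filter, Finset.mem_univ, true_and]
    constructor
    · rintro ⟨⟨_, hg⟩, rfl⟩
      exact ⟨hg, rfl⟩
    · rintro ⟨hg, rfl⟩
      exact ⟨⟨hj, hg⟩, rfl⟩
  · rw [Finset.card_eq_zero, Finset.filter_eq_empty_iff]
    rintro g - ⟨⟨hg, -⟩, rfl⟩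
    exact hj hg

theorem numCompFrom_eq_pow_mulVec (k : ℕ) :
    (fun j => (numCompFrom n k j : ℤ)) = rhoMatrix n ^ k *ᵥ 1 := by
  induction k with
  | zero => ext j; simp [numCompFrom_zero]
  | succ k ih =>
    ext i
    rw [pow_succ', ← mulVec_mulVec, ← ih, numCompFrom_succ]
    simp [mulVec, dotProduct, rhoMatrix]

theorem numComp_succ_eq_dotProduct (k : ℕ) :
    (numComp n (k + 1) : ℤ) = 1 ⬝ᵥ (rhoMatrix n ^ k *ᵥ 1) := by
  rw [numComp_succ_eq_sum_numCompFrom, ← numCompFrom_eq_pow_mulVec, one_dotProduct]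
  push_cast
  rfl

end Counting

def nineRecurrence : LinearRecurrence ℤ := ⟨5, ![1, -3, -3, 4, 1]⟩

theorem nineRecurrence_charPoly :
    nineRecurrence.charPoly = X ^ 5 - X ^ 4 - 4 * X ^ 3 + 3 * X ^ 2 + 3 * X - 1 := by
  unfold nineRecurrence LinearRecurrence.charPoly
  simp only [Fin.sum_univ_five, ← C_mul_X_pow_eq_monomial, cons_val, Fin.coe_ofNat_eq_mod,
    Nat.reduceMod, eq_intCast]
  push_cast
  ring

theorem aeval_rhoMatrix_nine_charPoly_mulVec_one :
    aeval (rhoMatrix 9) nineRecurrence.charPoly *ᵥ 1 = 0 := by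
  simp only [nineRecurrence_charPoly, map_sub, map_add, map_mul, map_pow, map_ofNat, map_one,
    aeval_X]
  decide

/-- For `n = 9` and every `k ≥ 1`, the number of meaningful compositions
satisfies the recurrence f(k+5) = f(k+4) + 4·f(k+3) − 3·f(k+2) − 3·f(k+1) + f(k). -/
theorem numComp_nine_recurrence (k : ℕ) (hk : 1 ≤ k) :
    (numComp 9 (k + 5) : ℤ) = numComp 9 (k + 4) + 4 * numComp 9 (k + 3) - 3 * numComp 9 (k + 2) - 3 * numComp 9 (k + 1) + numComp 9 k := by
  obtain ⟨m, rfl⟩ : ∃ m, k = m + 1 := ⟨k - 1, by omega⟩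
  have h := nineRecurrence.isSolution_dotProduct_pow_mulVec
    aeval_rhoMatrix_nine_charPoly_mulVec_one 1 m
  unfold nineRecurrence at h
  simp only [Fin.sum_univ_five, cons_val, Fin.coe_ofNat_eq_mod, Nat.reduceMod] at h
  simp only [show ∀ r, m + 1 + r = m + r + 1 from fun r => by omega, numComp_succ_eq_dotProduct]
  linear_combination h
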